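/- arXiv:1611.09669 — 6 statements merged into one kernel-verified Lean document; each statement's English description precedes it below -/
import Mathlib

section
/- Let α be an n×n real matrix and β an m×n real matrix such that the pair (α,β) is observable, i.e. the kernel of the stacked observability matrix (β; βα; …; βα^{n−1}) is zero. Then there exists a constant K > 0, depending only on α and β, such that for every interval I ⊂ ℝ of integer length T ≥ 1, every locally integrable f : I → ℝⁿ, and every differentiable z : I → ℝⁿ satisfying z′(t) = α z(t) + f(t) for all t ∈ I, one has ∫_I ‖z(t)‖ dt ≤ K ( ∫_I ‖β z(t)‖ dt + ∫_I ‖f(t)‖ dt ). The constant K does not depend on the length T of the interval. -/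
/-!
On a unit interval `[c, c + 1]`, Duhamel's formula shows that `z` stays within `M ∫ ‖f‖` of the
free trajectory `t ↦ e^{(t-c)A} z(c)`, where `M` bounds `‖e^{sA}‖` for `s ∈ [0, 1]`. Observability
makes `v ↦ ∫₀¹ ‖B e^{sA} v‖ ds` a norm (a vanishing output forces `B Aᵏ v = 0` for every `k`, by
repeated differentiation at `s = 0`), so by compactness of the unit sphere it dominates `c₀ ‖v‖`.
Comparing `z` with the free trajectory therefore bounds `‖z(c)‖`, and hence `∫_c^{c+1} ‖z‖`, by
`∫_c^{c+1} ‖B z‖ + ∫_c^{c+1} ‖f‖`. Summing over the `T` unit intervals gives a constant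
independent of `T`.
-/

open MeasureTheory

open Set NormedSpace intervalIntegral

variable {E F : Type*} [NormedAddCommGroup E] [NormedSpace ℝ E]
  [NormedAddCommGroup F] [NormedSpace ℝ F]

theorem MeasureTheory.IntegrableOn.continuousOn_clm_apply {Φ : ℝ → E →L[ℝ] F} {f : ℝ → E}
    {K : Set ℝ} (hK : IsCompact K) (hΦ : ContinuousOn Φ K) (hf : IntegrableOn f K) :
    IntegrableOn (fun s => Φ s (f s)) K := by
  obtain ⟨C, hC⟩ := hK.exists_bound_of_continuousOn hΦ
  refine (hf.norm.const_mul C).mono' ?_ ?_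
  · exact isBoundedBilinearMap_apply.continuous.comp_aestronglyMeasurable
      ((hΦ.aestronglyMeasurable hK.measurableSet).prodMk hf.aestronglyMeasurable)
  · filter_upwards [ae_restrict_mem hK.measurableSet] with s hs
    exact (Φ s).le_of_opNorm_le (hC s hs) _

theorem exists_pos_mul_norm_le_of_continuous [FiniteDimensional ℝ E] {p : E → ℝ}
    (hp : Continuous p) (hsmul : ∀ r : ℝ, 0 ≤ r → ∀ v, p (r • v) = r * p v)
    (hpos : ∀ v ≠ 0, 0 < p v) : ∃ c > 0, ∀ v, c * ‖v‖ ≤ p v := by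
  rcases subsingleton_or_nontrivial E with hE | hE
  · refine ⟨1, one_pos, fun v => ?_⟩
    simpa [Subsingleton.elim v 0] using (hsmul 0 le_rfl 0).ge
  obtain ⟨v₀, hv₀_mem, hmin⟩ := (isCompact_sphere (0 : E) 1).exists_isMinOn
    (NormedSpace.sphere_nonempty.mpr zero_le_one) hp.continuousOn
  have hv₀ : ‖v₀‖ = 1 := by simpa using hv₀_mem
  refine ⟨p v₀, hpos v₀ (norm_ne_zero_iff.mp (by simp [hv₀])), fun v => ?_⟩
  rcases eq_or_ne v 0 with rfl | hv
  · simpa using (hsmul 0 le_rfl 0).ge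
  have hvn : 0 < ‖v‖ := norm_pos_iff.mpr hv
  have hunit : ‖v‖⁻¹ • v ∈ Metric.sphere (0 : E) 1 := by
    simp [norm_smul, hvn.ne']
  calc p v₀ * ‖v‖ ≤ p (‖v‖⁻¹ • v) * ‖v‖ := by gcongr; exact hmin hunit
    _ = p v := by rw [hsmul _ (inv_nonneg.mpr hvn.le), inv_mul_eq_div, div_mul_cancel₀ _ hvn.ne']

noncomputable def observabilityNorm (A : E →L[ℝ] E) (B : E →L[ℝ] F) (v : E) : ℝ :=
  ∫ s in (0 : ℝ)..1, ‖B (exp (s • A) v)‖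

theorem observabilityNorm_smul (A : E →L[ℝ] E) (B : E →L[ℝ] F) {r : ℝ} (hr : 0 ≤ r) (v : E) :
    observabilityNorm A B (r • v) = r * observabilityNorm A B v := by
  simp only [observabilityNorm, map_smul, norm_smul, Real.norm_of_nonneg hr]
  exact integral_const_mul r _

theorem integral_norm_le_mul_norm_add {A : E →L[ℝ] E} {z : ℝ → E} {c δ M : ℝ}
    (hM : ∀ s ∈ Icc (0 : ℝ) 1, ‖exp (s • A)‖ ≤ M)
    (hzc : ContinuousOn z (Icc c (c + 1)))
    (hdev : ∀ t ∈ Icc c (c + 1), ‖z t - exp ((t - c) • A) (z c)‖ ≤ δ) :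
    ∫ t in c..c + 1, ‖z t‖ ≤ M * ‖z c‖ + δ := by
  have hcc : c ≤ c + 1 := by linarith
  calc ∫ t in c..c + 1, ‖z t‖ ≤ ∫ t in c..c + 1, (M * ‖z c‖ + δ) := by
        refine integral_mono_on hcc (hzc.norm.intervalIntegrable_of_Icc hcc)
          intervalIntegrable_const fun t ht => ?_
        calc ‖z t‖ ≤ ‖exp ((t - c) • A) (z c)‖ + ‖z t - exp ((t - c) • A) (z c)‖ :=
              norm_le_insert' _ _
          _ ≤ M * ‖z c‖ + δ := by
              gcongr
              · exact (exp ((t - c) • A)).le_of_opNorm_le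
                  (hM _ ⟨by linarith [ht.1], by linarith [ht.2]⟩) _
              · exact hdev t ht
    _ = M * ‖z c‖ + δ := by simp

section Complete

variable [CompleteSpace E]

theorem continuous_exp_smul (A : E →L[ℝ] E) : Continuous fun s : ℝ => exp (s • A) :=
  (differentiable_exp_smul_const ℝ A).continuous

theorem continuous_apply_exp_smul_apply (A : E →L[ℝ] E) (B : E →L[ℝ] F) :
    Continuous fun p : ℝ × E => B (exp (p.1 • A) p.2) :=
  B.continuous.comp (((continuous_exp_smul A).comp continuous_fst).clm_apply continuous_snd)

theorem sub_exp_smul_apply_eq_integral (A : E →L[ℝ] E) {f z : ℝ → E} {c t : ℝ} (hct : c ≤ t)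
    (hf : IntegrableOn f (Icc c t))
    (hz : ∀ s ∈ Icc c t, HasDerivAt z (A (z s) + f s) s) :
    z t - exp ((t - c) • A) (z c) = ∫ s in c..t, exp ((t - s) • A) (f s) := by
  have hderiv : ∀ s ∈ uIcc c t,
      HasDerivAt (fun s => exp ((t - s) • A) (z s)) (exp ((t - s) • A) (f s)) s := by
    intro s hs
    rw [uIcc_of_le hct] at hs
    have hexp : HasDerivAt (fun s => exp ((t - s) • A)) (-(exp ((t - s) • A) * A)) s := by
      simpa [Function.comp_def] using
        (hasDerivAt_exp_smul_const A (t - s)).scomp s ((hasDerivAt_id s).const_sub t)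
    convert hexp.clm_apply (hz s hs) using 1
    simp [map_add]
  have hint : IntervalIntegrable (fun s => exp ((t - s) • A) (f s)) volume c t := by
    rw [intervalIntegrable_iff_integrableOn_Icc_of_le hct]
    exact hf.continuousOn_clm_apply isCompact_Icc
      ((continuous_exp_smul A).comp (continuous_const.sub continuous_id)).continuousOn
  rw [integral_eq_sub_of_hasDerivAt hderiv hint]
  simp

theorem norm_sub_exp_smul_apply_le (A : E →L[ℝ] E) {f z : ℝ → E} {c d M : ℝ}
    (hM : ∀ s ∈ Icc 0 (d - c), ‖exp (s • A)‖ ≤ M) (hf : IntegrableOn f (Icc c d))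
    (hz : ∀ s ∈ Icc c d, HasDerivAt z (A (z s) + f s) s) {t : ℝ} (ht : t ∈ Icc c d) :
    ‖z t - exp ((t - c) • A) (z c)‖ ≤ M * ∫ s in c..d, ‖f s‖ := by
  have hsub : Icc c t ⊆ Icc c d := Icc_subset_Icc_right ht.2
  have hM0 : 0 ≤ M := (norm_nonneg _).trans (hM 0 ⟨le_rfl, by linarith [ht.1, ht.2]⟩)
  have hfI : IntervalIntegrable (fun s => ‖f s‖) volume c d :=
    ((intervalIntegrable_iff_integrableOn_Icc_of_le (ht.1.trans ht.2)).mpr hf).norm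
  rw [sub_exp_smul_apply_eq_integral A ht.1 (hf.mono_set hsub) fun s hs => hz s (hsub hs)]
  calc ‖∫ s in c..t, exp ((t - s) • A) (f s)‖ ≤ ∫ s in c..t, M * ‖f s‖ := by
        refine norm_integral_le_of_norm_le ht.1 (ae_of_all _ fun s hs => ?_)
          ((hfI.mono_set ?_).const_mul M)
        · refine (exp ((t - s) • A)).le_of_opNorm_le (hM _ ⟨?_, ?_⟩) _ <;>
            linarith [hs.1, hs.2, ht.2]
        · exact uIcc_subset_uIcc_left (by rw [uIcc_of_le (ht.1.trans ht.2)]; exact ht)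
    _ = M * ∫ s in c..t, ‖f s‖ := integral_const_mul M _
    _ ≤ M * ∫ s in c..d, ‖f s‖ := by
        gcongr
        exact integral_mono_interval le_rfl ht.1 ht.2
          (ae_of_all _ fun _ => norm_nonneg _) hfI

theorem apply_exp_smul_map_apply_eq_zero (A : E →L[ℝ] E) (B : E →L[ℝ] F) {v : E}
    {a b : ℝ} (hab : a < b) (hv : ∀ s ∈ Icc a b, B (exp (s • A) v) = 0) :
    ∀ s ∈ Icc a b, B (exp (s • A) (A v)) = 0 := by
  intro s hs
  have hderiv : HasDerivWithinAt (fun s : ℝ => B (exp (s • A) v))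
      (B (exp (s • A) (A v))) (Icc a b) s := by
    have := B.hasFDerivAt.comp_hasDerivAt s
      ((hasDerivAt_exp_smul_const A s).clm_apply (hasDerivAt_const s v))
    simpa [Function.comp_def] using this.hasDerivWithinAt
  exact (uniqueDiffOn_Icc hab s hs).eq_deriv _ hderiv
    ((hasDerivWithinAt_const s _ 0).congr hv (hv s hs))

theorem apply_pow_apply_eq_zero_of_apply_exp_smul_eq_zero (A : E →L[ℝ] E) (B : E →L[ℝ] F)
    {a b : ℝ} (hab : a < b) (h0 : 0 ∈ Icc a b) :
    ∀ (k : ℕ) (v : E), (∀ s ∈ Icc a b, B (exp (s • A) v) = 0) → B ((A ^ k) v) = 0 := by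
  intro k
  induction k with
  | zero => intro v hv; simpa using hv 0 h0
  | succ k ih =>
    intro v hv
    rw [pow_succ]
    exact ih (A v) (apply_exp_smul_map_apply_eq_zero A B hab hv)

theorem continuous_observabilityNorm (A : E →L[ℝ] E) (B : E →L[ℝ] F) :
    Continuous (observabilityNorm A B) :=
  continuous_parametric_intervalIntegral_of_continuous'
    ((continuous_apply_exp_smul_apply A B).comp continuous_swap).norm 0 1

theorem observabilityNorm_pos (A : E →L[ℝ] E) (B : E →L[ℝ] F)
    (hobs : ∀ v : E, (∀ k : ℕ, B ((A ^ k) v) = 0) → v = 0) {v : E} (hv : v ≠ 0) :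
    0 < observabilityNorm A B v := by
  by_contra! hle
  refine hv (hobs v fun k => apply_pow_apply_eq_zero_of_apply_exp_smul_eq_zero A B zero_lt_one
    (left_mem_Icc.mpr zero_le_one) k v fun s hs => ?_)
  by_contra hne
  refine hle.not_gt (integral_pos zero_lt_one ?_ (fun _ _ => norm_nonneg _)
    ⟨s, hs, norm_pos_iff.mpr hne⟩)
  exact ((continuous_apply_exp_smul_apply A B).comp
    (continuous_id.prodMk continuous_const)).norm.continuousOn

theorem observabilityNorm_le_integral_add {A : E →L[ℝ] E} {z : ℝ → E} {c δ : ℝ} (B : E →L[ℝ] F)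
    (hzc : ContinuousOn z (Icc c (c + 1)))
    (hdev : ∀ t ∈ Icc c (c + 1), ‖z t - exp ((t - c) • A) (z c)‖ ≤ δ) :
    observabilityNorm A B (z c) ≤ (∫ t in c..c + 1, ‖B (z t)‖) + ‖B‖ * δ := by
  have hcc : c ≤ c + 1 := by linarith
  have hBz : IntervalIntegrable (fun t => ‖B (z t)‖) volume c (c + 1) :=
    ((B.continuous.comp_continuousOn hzc).norm).intervalIntegrable_of_Icc hcc
  calc observabilityNorm A B (z c) = ∫ t in c..c + 1, ‖B (exp ((t - c) • A) (z c))‖ := by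
        rw [integral_comp_sub_right (fun s => ‖B (exp (s • A) (z c))‖)]
        simp [observabilityNorm]
    _ ≤ ∫ t in c..c + 1, (‖B (z t)‖ + ‖B‖ * δ) := by
        refine integral_mono_on hcc ?_ (hBz.add intervalIntegrable_const) fun t ht => ?_
        · exact ((continuous_apply_exp_smul_apply A B).comp
            ((continuous_id.sub continuous_const).prodMk continuous_const)).norm.intervalIntegrable
            _ _
        · calc ‖B (exp ((t - c) • A) (z c))‖
              ≤ ‖B (z t)‖ + ‖B (z t - exp ((t - c) • A) (z c))‖ := by
                simpa using norm_sub_le (B (z t)) (B (z t - exp ((t - c) • A) (z c)))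
            _ ≤ ‖B (z t)‖ + ‖B‖ * δ := by
                gcongr
                exact (B.le_opNorm _).trans (by gcongr; exact hdev t ht)
    _ = (∫ t in c..c + 1, ‖B (z t)‖) + ‖B‖ * δ := by
        simp [integral_add hBz intervalIntegrable_const]

end Complete

theorem exists_pos_mul_norm_le_observabilityNorm [FiniteDimensional ℝ E]
    (A : E →L[ℝ] E) (B : E →L[ℝ] F)
    (hobs : ∀ v : E, (∀ k : ℕ, B ((A ^ k) v) = 0) → v = 0) :
    ∃ c > 0, ∀ v, c * ‖v‖ ≤ observabilityNorm A B v :=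
  have := FiniteDimensional.complete ℝ E
  exists_pos_mul_norm_le_of_continuous (continuous_observabilityNorm A B)
    (fun _ hr v => observabilityNorm_smul A B hr v) (fun _ hv => observabilityNorm_pos A B hobs hv)

theorem exists_integral_norm_le_on_unit_interval [FiniteDimensional ℝ E]
    (A : E →L[ℝ] E) (B : E →L[ℝ] F)
    (hobs : ∀ v : E, (∀ k : ℕ, B ((A ^ k) v) = 0) → v = 0) :
    ∃ K > (0 : ℝ), ∀ (c : ℝ) (f z : ℝ → E), IntegrableOn f (Icc c (c + 1)) →
      (∀ t ∈ Icc c (c + 1), HasDerivAt z (A (z t) + f t) t) →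
      ∫ t in c..c + 1, ‖z t‖ ≤ K * ∫ t in c..c + 1, (‖B (z t)‖ + ‖f t‖) := by
  have := FiniteDimensional.complete ℝ E
  obtain ⟨M, hM_pos, hM⟩ : ∃ M > (0 : ℝ), ∀ s ∈ Icc (0 : ℝ) 1, ‖exp (s • A)‖ ≤ M := by
    obtain ⟨M, hM⟩ :=
      isCompact_Icc.exists_bound_of_continuousOn (continuous_exp_smul A).continuousOn
    exact ⟨max M 1, by positivity, fun s hs => (hM s hs).trans (le_max_left _ _)⟩
  obtain ⟨c₀, hc₀, hcoer⟩ := exists_pos_mul_norm_le_observabilityNorm A B hobs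
  refine ⟨M / c₀ + M / c₀ * ‖B‖ * M + M, by positivity, fun c f z hf hz => ?_⟩
  have hcc : c ≤ c + 1 := by linarith
  have hzc : ContinuousOn z (Icc c (c + 1)) := fun t ht =>
    (hz t ht).continuousAt.continuousWithinAt
  set G := ∫ t in c..c + 1, ‖B (z t)‖
  set Φ := ∫ t in c..c + 1, ‖f t‖
  have hdev : ∀ t ∈ Icc c (c + 1), ‖z t - exp ((t - c) • A) (z c)‖ ≤ M * Φ :=
    fun t ht => norm_sub_exp_smul_apply_le A (by simpa using hM) hf hz ht
  have hzc_le : ‖z c‖ ≤ (G + ‖B‖ * (M * Φ)) / c₀ := by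
    rw [le_div_iff₀ hc₀, mul_comm]
    exact (hcoer (z c)).trans (observabilityNorm_le_integral_add B hzc hdev)
  have hG : 0 ≤ G := integral_nonneg hcc fun _ _ => norm_nonneg _
  have hΦ : 0 ≤ Φ := integral_nonneg hcc fun _ _ => norm_nonneg _
  have hMc : 0 ≤ M / c₀ := by positivity
  have hMBM : 0 ≤ M / c₀ * ‖B‖ * M := by positivity
  have hBz : IntervalIntegrable (fun t => ‖B (z t)‖) volume c (c + 1) :=
    ((B.continuous.comp_continuousOn hzc).norm).intervalIntegrable_of_Icc hcc
  have hfI : IntervalIntegrable (fun t => ‖f t‖) volume c (c + 1) :=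
    ((intervalIntegrable_iff_integrableOn_Icc_of_le hcc).mpr hf).norm
  rw [integral_add hBz hfI]
  calc ∫ t in c..c + 1, ‖z t‖ ≤ M * ‖z c‖ + M * Φ := integral_norm_le_mul_norm_add hM hzc hdev
    _ ≤ M * ((G + ‖B‖ * (M * Φ)) / c₀) + M * Φ := by gcongr
    _ = M / c₀ * G + (M / c₀ * ‖B‖ * M + M) * Φ := by ring
    _ ≤ (M / c₀ + M / c₀ * ‖B‖ * M + M) * G + (M / c₀ + M / c₀ * ‖B‖ * M + M) * Φ := by
        gcongr ?_ * _ + ?_ * _ <;> linarith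
    _ = (M / c₀ + M / c₀ * ‖B‖ * M + M) * (G + Φ) := by ring

theorem integral_le_integral_of_le_on_unit_intervals {g h : ℝ → ℝ} {a : ℝ} {T : ℕ}
    (hg : IntervalIntegrable g volume a (a + T)) (hh : IntervalIntegrable h volume a (a + T))
    (hgh : ∀ i < T, ∫ t in (a + i)..(a + i + 1), g t ≤ ∫ t in (a + i)..(a + i + 1), h t) :
    ∫ t in a..(a + T), g t ≤ ∫ t in a..(a + T), h t := by
  have hsum : ∀ φ : ℝ → ℝ, IntervalIntegrable φ volume a (a + T) →
      ∑ i ∈ Finset.range T, ∫ t in (a + i)..(a + i + 1), φ t = ∫ t in a..(a + T), φ t := by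
    intro φ hφ
    have hmem : ∀ k ≤ T, a + (k : ℝ) ∈ uIcc a (a + T) := fun k hk =>
      mem_uIcc_of_le (by simp) (by simp [hk])
    simpa [add_assoc] using sum_integral_adjacent_intervals (a := fun i : ℕ => a + i)
      fun k hk => hφ.mono_set (uIcc_subset_uIcc (hmem k hk.le) (hmem (k + 1) hk))
  rw [← hsum g hg, ← hsum h hh]
  exact Finset.sum_le_sum fun i hi => hgh i (Finset.mem_range.mp hi)

/-- If the pair `(α, β)` is observable, there is a constant `K > 0`,
depending only on `α` and `β` (in particular not on the length `T` of the interval),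
such that any solution `z` of `z' = α z + f` on an interval of integer length `T ≥ 1`
satisfies `∫ ‖z‖ ≤ K (∫ ‖β z‖ + ∫ ‖f‖)`. -/
theorem observability_a_priori_estimate {n m : ℕ}
    (α : Matrix (Fin n) (Fin n) ℝ) (β : Matrix (Fin m) (Fin n) ℝ)
    (hobs : ∀ v : EuclideanSpace ℝ (Fin n),
      (∀ k < n, Matrix.toEuclideanLin β (Matrix.toEuclideanLin (α ^ k) v) = 0) → v = 0) :
    ∃ K > (0 : ℝ), ∀ (a : ℝ) (T : ℕ), 1 ≤ T →
      ∀ f z : ℝ → EuclideanSpace ℝ (Fin n),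
        IntegrableOn f (Set.Icc a (a + (T : ℝ))) →
        (∀ t ∈ Set.Icc a (a + (T : ℝ)),
          HasDerivAt z (Matrix.toEuclideanLin α (z t) + f t) t) →
        ∫ t in a..(a + (T : ℝ)), ‖z t‖ ≤
          K * ((∫ t in a..(a + (T : ℝ)), ‖Matrix.toEuclideanLin β (z t)‖) +
               ∫ t in a..(a + (T : ℝ)), ‖f t‖) := by
  set A := Matrix.toEuclideanCLM (𝕜 := ℝ) α
  set B := (Matrix.toEuclideanLin β).toContinuousLinearMap
  have hobs' : ∀ v, (∀ k : ℕ, B ((A ^ k) v) = 0) → v = 0 := fun v hv =>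
    hobs v fun k _ => by have h := hv k; simp only [A, ← map_pow] at h; exact h
  obtain ⟨K, hK, hunit⟩ := exists_integral_norm_le_on_unit_interval A B hobs'
  refine ⟨K, hK, fun a T _ f z hf hz => ?_⟩
  have haT : a ≤ a + T := by simp
  have hzc : ContinuousOn z (Icc a (a + T)) := fun t ht =>
    (hz t ht).continuousAt.continuousWithinAt
  have hBz : IntervalIntegrable (fun t => ‖B (z t)‖) volume a (a + T) :=
    ((B.continuous.comp_continuousOn hzc).norm).intervalIntegrable_of_Icc haT
  have hfI : IntervalIntegrable (fun t => ‖f t‖) volume a (a + T) :=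
    ((intervalIntegrable_iff_integrableOn_Icc_of_le haT).mpr hf).norm
  change _ ≤ K * ((∫ t in a..(a + (T : ℝ)), ‖B (z t)‖) + _)
  rw [← integral_add hBz hfI, ← intervalIntegral.integral_const_mul]
  refine integral_le_integral_of_le_on_unit_intervals (hzc.norm.intervalIntegrable_of_Icc haT)
    ((hBz.add hfI).const_mul K) fun i hi => ?_
  have hsub : Icc (a + i) (a + i + 1) ⊆ Icc a (a + T) :=
    Icc_subset_Icc (by simp) (by rw [add_assoc]; gcongr; exact_mod_cast hi)
  rw [intervalIntegral.integral_const_mul]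
  exact hunit (a + i) f z (hf.mono_set hsub) fun t ht => hz t (hsub ht)
end

section
/- Let ω_1, …, ω_N be positive reals with pairwise distinct squares ω_i². Let A be the 2N×2N block-diagonal matrix with 2×2 blocks [[0,1],[−ω_i²,0]] and let B ∈ ℝ^{2N} have entries B_{2i−1}=0, B_{2i}=1 (i=1,…,N). Let C be the 1×2N row vector C = (c_1, 0, c_2, 0, …, c_N, 0) with c_k = (−1)^{N+1} ω_k^{2N} Π_{i≠k} (ω_i² − ω_k²)^{−1}. Then the matrix A + BC is nilpotent: (A + BC)^{2N} = 0. -/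
open Matrix

/-- The `2N × 2N` block-diagonal system matrix of `N` oscillators, with `2×2` blocks
`[[0,1],[-ω_i², 0]]` (0-based indexing: row `2i` is the `x_i`-row, row `2i+1` the `y_i`-row). -/
noncomputable def oscA (N : ℕ) (ω : Fin N → ℝ) : Matrix (Fin (2 * N)) (Fin (2 * N)) ℝ :=
  Matrix.of fun i j =>
    if i.val % 2 = 0 ∧ j.val = i.val + 1 then 1
    else if i.val % 2 = 1 ∧ i.val = j.val + 1 then
      -(ω ⟨i.val / 2, by have := i.isLt; omega⟩) ^ 2
    else 0

/-- The control vector `B ∈ ℝ^{2N}` with `B_{2i-1} = 0`, `B_{2i} = 1` (1-based). -/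
def oscB (N : ℕ) : Fin (2 * N) → ℝ := fun i => if i.val % 2 = 1 then 1 else 0

/-- The coefficient `c_k = (-1)^{N+1} ω_k^{2N} Π_{i≠k} (ω_i² - ω_k²)⁻¹`. -/
noncomputable def oscc (N : ℕ) (ω : Fin N → ℝ) (k : Fin N) : ℝ :=
  (-1) ^ (N + 1) * ω k ^ (2 * N) * ∏ i ∈ Finset.univ.erase k, ((ω i) ^ 2 - (ω k) ^ 2)⁻¹

/-- The row vector `C = (c_1, 0, c_2, 0, …, c_N, 0)`. -/
noncomputable def oscC (N : ℕ) (ω : Fin N → ℝ) : Fin (2 * N) → ℝ := fun i =>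
  if i.val % 2 = 0 then oscc N ω ⟨i.val / 2, by have := i.isLt; omega⟩ else 0

/-! Ordering the coordinates as `(x₁, …, x_N, y₁, …, y_N)` turns `A + BC` into the block matrix
`[[0, 1], [Q, 0]]` with `Q = -diag(ω²) + 𝟙 cᵀ`, whose square is `diag(Q, Q)`; so it suffices that
`Q ^ N = 0`. By the matrix determinant lemma, the characteristic polynomial of `Q` is
`∏ (X + ω_i²) - ∑ c_k ∏_{i ≠ k} (X + ω_i²)`, and by Lagrange interpolation at the nodes `-ω_k²`
the `c_k` are precisely the coefficients of `∏ (X + ω_i²) - X ^ N` in the basis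
`∏_{i ≠ k} (X + ω_i²)`. Hence `Q` has
characteristic polynomial `X ^ N`, and Cayley–Hamilton gives `Q ^ N = 0`. -/

open Polynomial Finset

section LagrangeWeights

variable {F ι : Type*} [Field F] [Fintype ι] [DecidableEq ι]

def lagrangeWeights (x : ι → F) (k : ι) : F :=
  -x k ^ Fintype.card ι * ∏ i ∈ univ.erase k, (x k - x i)⁻¹

theorem prod_X_sub_C_sub_X_pow_card_eq_sum (x : ι → F) (hx : Function.Injective x) :
    ∏ i, (X - C (x i)) - X ^ Fintype.card ι =
      ∑ k, C (lagrangeWeights x k) * ∏ i ∈ univ.erase k, (X - C (x i)) := by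
  have hmonic : (∏ i, (X - C (x i))).Monic :=
    monic_prod_of_monic _ _ fun i _ => monic_X_sub_C (x i)
  have hdeg : (∏ i, (X - C (x i))).degree = (Fintype.card ι : WithBot ℕ) := by
    rw [degree_eq_natDegree hmonic.ne_zero, natDegree_finsetProd_X_sub_C_eq_card, card_univ]
  have hinterp : ∏ i, (X - C (x i)) - X ^ Fintype.card ι =
      Lagrange.interpolate univ x fun k => -x k ^ Fintype.card ι := by
    refine Lagrange.eq_interpolate_of_eval_eq _ hx.injOn ?_ fun k _ => ?_
    · rw [card_univ, ← hdeg]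
      exact degree_sub_lt_left (by rw [hdeg, degree_X_pow]) hmonic.ne_zero
        (by rw [hmonic.leadingCoeff, leadingCoeff_X_pow])
    · simp [eval_prod, prod_eq_zero (mem_univ k)]
  simp only [hinterp, Lagrange.interpolate_apply, Lagrange.basis, Lagrange.basisDivisor,
    prod_mul_distrib, ← map_prod, ← mul_assoc, ← C_mul, lagrangeWeights]

theorem det_diagonal_add_vecMulVec (d u v : ι → F) (hd : ∀ i, d i ≠ 0) :
    (diagonal d + vecMulVec u v).det = ∏ i, d i + ∑ k, u k * v k * ∏ i ∈ univ.erase k, d i := by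
  have hfactor : diagonal d + vecMulVec u v = diagonal d * (1 + vecMulVec (d⁻¹ * u) v) := by
    rw [Matrix.mul_add, Matrix.mul_one]
    congr
    ext i j
    simp only [diagonal_mul, vecMulVec_apply, Pi.mul_apply, Pi.inv_apply]
    field_simp [hd i]
  rw [hfactor, det_mul, det_diagonal, vecMulVec_eq (Fin 1),
    det_one_add_replicateCol_mul_replicateRow, mul_add, mul_one, dotProduct, mul_sum]
  congr 1
  refine sum_congr rfl fun k _ => ?_
  rw [← mul_prod_erase univ d (mem_univ k), Pi.mul_apply, Pi.inv_apply]
  field_simp [hd k]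

theorem charpoly_diagonal_add_vecMulVec_one [Infinite F] (x w : ι → F) :
    (diagonal x + vecMulVec 1 w).charpoly =
      ∏ i, (X - C (x i)) - ∑ k, C (w k) * ∏ i ∈ univ.erase k, (X - C (x i)) := by
  refine eq_of_infinite_eval_eq _ _ ((Set.finite_range x).infinite_compl.mono fun t ht => ?_)
  have hne : ∀ i, t - x i ≠ 0 := fun i h => ht ⟨i, (sub_eq_zero.mp h).symm⟩
  have hscalar : scalar ι t - (diagonal x + vecMulVec 1 w) =
      diagonal (fun i => t - x i) + vecMulVec (-1) w := by
    ext i j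
    obtain rfl | hij := eq_or_ne i j
    · simp only [scalar_apply, one_vecMulVec, neg_vecMulVec, Matrix.sub_apply, Matrix.add_apply,
        Matrix.neg_apply, diagonal_apply_eq, replicateRow_apply]
      ring
    · simp [hij]
  simp only [Set.mem_ofPred_eq, eval_charpoly, hscalar, det_diagonal_add_vecMulVec _ _ _ hne]
  simp [eval_prod, eval_finsetSum, sub_eq_add_neg]

theorem diagonal_add_vecMulVec_one_lagrangeWeights_pow_card [Infinite F] (x : ι → F)
    (hx : Function.Injective x) :
    (diagonal x + vecMulVec 1 (lagrangeWeights x)) ^ Fintype.card ι = 0 := by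
  have hcharpoly : (diagonal x + vecMulVec 1 (lagrangeWeights x)).charpoly =
      X ^ Fintype.card ι := by
    rw [charpoly_diagonal_add_vecMulVec_one, ← prod_X_sub_C_sub_X_pow_card_eq_sum x hx,
      sub_sub_cancel]
  have hCayleyHamilton := aeval_self_charpoly (diagonal x + vecMulVec 1 (lagrangeWeights x))
  rwa [hcharpoly, aeval_X_pow] at hCayleyHamilton

end LagrangeWeights

theorem fromBlocks_zero_one_pow_two_mul {α n : Type*} [Semiring α] [Fintype n] [DecidableEq n]
    (Q : Matrix n n α) (k : ℕ) :
    fromBlocks 0 1 Q 0 ^ (2 * k) = fromBlocks (Q ^ k) 0 0 (Q ^ k) := by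
  rw [pow_mul, sq, fromBlocks_multiply]
  simpa using fromBlocks_diagonal_pow Q Q k

def finSumFinInterleave (N : ℕ) : Fin N ⊕ Fin N ≃ Fin (2 * N) where
  toFun := Sum.elim (fun k => ⟨2 * k, by omega⟩) (fun k => ⟨2 * k + 1, by omega⟩)
  invFun i := if i.val % 2 = 0 then .inl ⟨i / 2, by omega⟩ else .inr ⟨i / 2, by omega⟩
  left_inv := by
    rintro (k | k) <;> simp [Nat.mul_add_div two_pos]
  right_inv i := by
    by_cases h : i.val % 2 = 0 <;> simp [h, Fin.ext_iff] <;> omega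

theorem submatrix_oscA_add_vecMulVec (N : ℕ) (ω : Fin N → ℝ) :
    (oscA N ω + vecMulVec (oscB N) (oscC N ω)).submatrix (finSumFinInterleave N)
        (finSumFinInterleave N) =
      fromBlocks 0 1 (diagonal (fun k => -ω k ^ 2) + vecMulVec 1 (oscc N ω)) 0 := by
  ext (k | k) (l | l) <;>
    simp [finSumFinInterleave, oscA, oscB, oscC, vecMulVec_apply, one_apply, diagonal_apply,
      Nat.mul_add_div two_pos, Fin.val_inj, eq_comm] <;> omega

theorem oscc_eq_lagrangeWeights (N : ℕ) (ω : Fin N → ℝ) :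
    oscc N ω = lagrangeWeights fun k => -ω k ^ 2 := by
  funext k
  rw [oscc, lagrangeWeights, Fintype.card_fin, pow_mul, neg_pow, pow_succ]
  congr 1
  · ring
  · exact prod_congr rfl fun i _ => by ring

theorem oscA_add_BC_nilpotent_general (N : ℕ) (ω : Fin N → ℝ)
    (hdist : ∀ i j : Fin N, i ≠ j → ω i ^ 2 ≠ ω j ^ 2) :
    (oscA N ω + vecMulVec (oscB N) (oscC N ω)) ^ (2 * N) = 0 := by
  have hinj : Function.Injective fun k => -ω k ^ 2 := fun i j h =>
    by_contra fun hij => hdist i j hij (neg_inj.mp h)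
  have hQ : (diagonal (fun k => -ω k ^ 2) + vecMulVec 1 (oscc N ω)) ^ N = 0 := by
    simpa [oscc_eq_lagrangeWeights] using
      diagonal_add_vecMulVec_one_lagrangeWeights_pow_card _ hinj
  apply (reindexAlgEquiv ℝ ℝ (finSumFinInterleave N).symm).injective
  rw [map_pow, map_zero, coe_reindexAlgEquiv, reindex_apply, Equiv.symm_symm,
    submatrix_oscA_add_vecMulVec, fromBlocks_zero_one_pow_two_mul, hQ, fromBlocks_zero]

/-- For pairwise distinct squares of the frequencies, the matrix `A + BC`
is nilpotent: `(A + BC)^{2N} = 0`. -/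
theorem oscA_add_BC_nilpotent (N : ℕ) (hN : 0 < N) (ω : Fin N → ℝ)
    (hpos : ∀ i, 0 < ω i) (hdist : ∀ i j : Fin N, i ≠ j → ω i ^ 2 ≠ ω j ^ 2) :
    (oscA N ω + vecMulVec (oscB N) (oscC N ω)) ^ (2 * N) = 0 :=
  oscA_add_BC_nilpotent_general N ω hdist
end

section
/- Let ω_1, …, ω_N be positive reals with pairwise distinct squares ω_i², let A, B, C be as follows: A is the 2N×2N block-diagonal matrix with 2×2 blocks [[0,1],[−ω_i²,0]], B ∈ ℝ^{2N} has entries B_{2i−1}=0, B_{2i}=1, and C = (c_1, 0, …, c_N, 0) with c_k = (−1)^{N+1} ω_k^{2N} Π_{i≠k}(ω_i² − ω_k²)^{−1}. Define 𝔢_i = ((−1)^{i−1}/(i−1)!) (A+BC)^{i−1} B for i = 1, …, 2N. Then the vectors 𝔢_1, …, 𝔢_{2N} form a basis of ℝ^{2N}. -/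
/-! Adding the rank-one feedback `BC` to `A` does not change the Krylov spaces
`span {B, A B, …, A^{k-1} B}`, since `A^{k+1} B = (A + BC) (A^k B) - (C A^k B) B`.
For the oscillator matrix, `A^{2m} B` and `A^{2m+1} B` carry `(-ω_i²)^m` on the velocity,
resp. position, coordinate of the `i`-th oscillator and vanish elsewhere, so a linear relation
among them splits into two Vandermonde systems in the distinct nodes `-ω_i²`. Hence the vectors
`(A + BC)^k B`, `k < 2N`, span `ℝ^{2N}`, so do their nonzero multiples `𝔢_{k+1}`, and `2N`
spanning vectors of `ℝ^{2N}` form a basis. -/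

open Matrix

/-- The vectors `𝔢_i = ((-1)^{i-1}/(i-1)!) (A+BC)^{i-1} B`, `i = 1, …, 2N`
(here indexed by `k : Fin (2N)` with `k = i - 1`). -/
noncomputable def oscE (N : ℕ) (ω : Fin N → ℝ) (k : Fin (2 * N)) : Fin (2 * N) → ℝ :=
  ((-1 : ℝ) ^ (k : ℕ) / (Nat.factorial (k : ℕ) : ℝ)) •
    ((oscA N ω + vecMulVec (oscB N) (oscC N ω)) ^ (k : ℕ)).mulVec (oscB N)

open Submodule

section Krylov

variable {R n : Type*} [CommRing R] [Fintype n] [DecidableEq n]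

def krylovSpan (A : Matrix n n R) (B : n → R) (k : ℕ) : Submodule R (n → R) :=
  span R (Set.range fun j : Fin k => A ^ (j : ℕ) *ᵥ B)

variable (A : Matrix n n R) (B : n → R)

theorem krylovSpan_mono {k l : ℕ} (h : k ≤ l) : krylovSpan A B k ≤ krylovSpan A B l :=
  span_mono <| by rintro _ ⟨j, rfl⟩; exact ⟨Fin.castLE h j, rfl⟩

theorem pow_mulVec_mem_krylovSpan {j k : ℕ} (h : j < k) : A ^ j *ᵥ B ∈ krylovSpan A B k :=
  subset_span ⟨⟨j, h⟩, rfl⟩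

theorem mulVec_mem_krylovSpan_succ {k : ℕ} {v : n → R} (hv : v ∈ krylovSpan A B k) :
    A *ᵥ v ∈ krylovSpan A B (k + 1) := by
  have hmap : A *ᵥ v ∈ (krylovSpan A B k).map A.mulVecLin := mem_map_of_mem hv
  rw [krylovSpan, map_span, ← Set.range_comp] at hmap
  refine span_le.2 ?_ hmap
  rintro _ ⟨j, rfl⟩
  simpa [pow_succ', mulVec_mulVec] using pow_mulVec_mem_krylovSpan A B (Nat.succ_lt_succ j.isLt)

theorem pow_mulVec_mem_krylovSpan_add_vecMulVec (C : n → R) (k : ℕ) :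
    A ^ k *ᵥ B ∈ krylovSpan (A + vecMulVec B C) B (k + 1) := by
  induction k with
  | zero => simpa using pow_mulVec_mem_krylovSpan (A + vecMulVec B C) B zero_lt_one
  | succ k ih =>
    have hfeedback : A ^ (k + 1) *ᵥ B =
        (A + vecMulVec B C) *ᵥ (A ^ k *ᵥ B) - (C ⬝ᵥ (A ^ k *ᵥ B)) • B := by
      rw [add_mulVec, vecMulVec_mulVec, pow_succ', ← mulVec_mulVec, op_smul_eq_smul,
        add_sub_cancel_right]
    have hB : B ∈ krylovSpan (A + vecMulVec B C) B (k + 2) := by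
      simpa using pow_mulVec_mem_krylovSpan (A + vecMulVec B C) B (Nat.succ_pos (k + 1))
    rw [hfeedback]
    exact sub_mem (mulVec_mem_krylovSpan_succ _ _ ih) (smul_mem _ _ hB)

theorem krylovSpan_le_krylovSpan_add_vecMulVec (C : n → R) (k : ℕ) :
    krylovSpan A B k ≤ krylovSpan (A + vecMulVec B C) B k :=
  span_le.2 <| by
    rintro _ ⟨j, rfl⟩
    exact krylovSpan_mono _ _ j.isLt (pow_mulVec_mem_krylovSpan_add_vecMulVec A B C j)

end Krylov

def oscIdx (N : ℕ) : Fin N × Fin 2 ≃ Fin (2 * N) :=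
  finProdFinEquiv.trans (finCongr (mul_comm N 2))

section Oscillator

variable {N : ℕ} (ω : Fin N → ℝ)

@[simp]
theorem oscIdx_val (i : Fin N) (b : Fin 2) : (oscIdx N (i, b) : ℕ) = 2 * i + b := by
  simp [oscIdx, finProdFinEquiv]
  omega

theorem oscB_oscIdx (i : Fin N) (b : Fin 2) :
    oscB N (oscIdx N (i, b)) = if b = 1 then 1 else 0 := by
  fin_cases b <;> simp [oscB]

theorem oscA_mulVec_oscIdx_zero (v : Fin (2 * N) → ℝ) (i : Fin N) :
    (oscA N ω *ᵥ v) (oscIdx N (i, 0)) = v (oscIdx N (i, 1)) := by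
  have hrow : ∀ j, oscA N ω (oscIdx N (i, 0)) j = if j = oscIdx N (i, 1) then 1 else 0 := by
    intro j
    simp [oscA, Fin.ext_iff]
  simp [mulVec, dotProduct, hrow]

theorem oscA_mulVec_oscIdx_one (v : Fin (2 * N) → ℝ) (i : Fin N) :
    (oscA N ω *ᵥ v) (oscIdx N (i, 1)) = -ω i ^ 2 * v (oscIdx N (i, 0)) := by
  have hrow : ∀ j,
      oscA N ω (oscIdx N (i, 1)) j = if j = oscIdx N (i, 0) then -ω i ^ 2 else 0 := by
    intro j
    have hi : (⟨(2 * i + 1) / 2, by omega⟩ : Fin N) = i := Fin.ext (by simp only; omega)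
    simp [oscA, Fin.ext_iff, hi, eq_comm]
  simp [mulVec, dotProduct, hrow]

theorem oscA_pow_mulVec_oscB_oscIdx (m : ℕ) (b b' : Fin 2) (i : Fin N) :
    (oscA N ω ^ (2 * m + b) *ᵥ oscB N) (oscIdx N (i, b')) =
      if b = b' then 0 else (-ω i ^ 2) ^ m := by
  induction m generalizing b' with
  | zero =>
    fin_cases b <;> fin_cases b' <;>
      simp [oscB_oscIdx, oscA_mulVec_oscIdx_zero, oscA_mulVec_oscIdx_one]
  | succ m ih =>
    rw [show 2 * (m + 1) + (b : ℕ) = 2 * m + b + 1 + 1 by ring, pow_succ', pow_succ',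
      ← mulVec_mulVec, ← mulVec_mulVec]
    fin_cases b' <;>
      simp only [Fin.zero_eta, Fin.mk_one, oscA_mulVec_oscIdx_zero, oscA_mulVec_oscIdx_one, ih] <;>
      split_ifs <;> ring

theorem linearIndependent_oscA_pow_mulVec_oscB
    (hdist : ∀ i j : Fin N, i ≠ j → ω i ^ 2 ≠ ω j ^ 2) :
    LinearIndependent ℝ fun k : Fin (2 * N) => oscA N ω ^ (k : ℕ) *ᵥ oscB N := by
  have hinj : Function.Injective fun i => -ω i ^ 2 := fun i j h =>
    not_imp_not.1 (hdist i j) (neg_inj.1 h)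
  rw [Fintype.linearIndependent_iff]
  intro g hg
  have hcoord : ∀ b' l, ∑ m : Fin N, ∑ b : Fin 2,
      g (oscIdx N (m, b)) * (if b = b' then 0 else (-ω l ^ 2) ^ (m : ℕ)) = 0 := by
    intro b' l
    have h := congrFun hg (oscIdx N (l, b'))
    rw [← (oscIdx N).sum_comp, Fintype.sum_prod_type] at h
    simpa only [Finset.sum_apply, Pi.smul_apply, smul_eq_mul, oscIdx_val,
      oscA_pow_mulVec_oscB_oscIdx, Pi.zero_apply] using h
  have hvanish : ∀ b, (fun m => g (oscIdx N (m, b))) = 0 := by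
    intro b
    refine Matrix.eq_zero_of_forall_index_sum_mul_pow_eq_zero hinj fun l => ?_
    fin_cases b
    · simpa using hcoord 1 l
    · simpa using hcoord 0 l
  intro k
  obtain ⟨⟨m, b⟩, rfl⟩ := (oscIdx N).surjective k
  exact congrFun (hvanish b) m

theorem krylovSpan_oscA_oscB_eq_top (hdist : ∀ i j : Fin N, i ≠ j → ω i ^ 2 ≠ ω j ^ 2) :
    krylovSpan (oscA N ω) (oscB N) (2 * N) = ⊤ :=
  (linearIndependent_oscA_pow_mulVec_oscB ω hdist).span_eq_top_of_card_eq_finrank' (by simp)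

theorem krylovSpan_le_span_oscE :
    krylovSpan (oscA N ω + vecMulVec (oscB N) (oscC N ω)) (oscB N) (2 * N) ≤
      span ℝ (Set.range (oscE N ω)) := by
  refine span_le.2 ?_
  rintro _ ⟨k, rfl⟩
  have hc : (-1 : ℝ) ^ (k : ℕ) / (Nat.factorial (k : ℕ) : ℝ) ≠ 0 := by positivity
  rw [SetLike.mem_coe, ← smul_mem_iff _ hc]
  exact subset_span ⟨k, rfl⟩

end Oscillator

theorem oscE_form_basis_general (N : ℕ) (ω : Fin N → ℝ)
    (hdist : ∀ i j : Fin N, i ≠ j → ω i ^ 2 ≠ ω j ^ 2) :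
    LinearIndependent ℝ (oscE N ω) ∧
    Submodule.span ℝ (Set.range (oscE N ω)) = ⊤ := by
  have hspan : span ℝ (Set.range (oscE N ω)) = ⊤ := top_unique <|
    calc ⊤ = krylovSpan (oscA N ω) (oscB N) (2 * N) := (krylovSpan_oscA_oscB_eq_top ω hdist).symm
      _ ≤ krylovSpan (oscA N ω + vecMulVec (oscB N) (oscC N ω)) (oscB N) (2 * N) :=
        krylovSpan_le_krylovSpan_add_vecMulVec _ _ _ _
      _ ≤ span ℝ (Set.range (oscE N ω)) := krylovSpan_le_span_oscE ω
  exact ⟨linearIndependent_of_top_le_span_of_card_eq_finrank hspan.ge (by simp), hspan⟩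

/-- The vectors `𝔢_1, …, 𝔢_{2N}` form a basis of `ℝ^{2N}`. -/
theorem oscE_form_basis (N : ℕ) (hN : 0 < N) (ω : Fin N → ℝ)
    (hpos : ∀ i, 0 < ω i) (hdist : ∀ i j : Fin N, i ≠ j → ω i ^ 2 ≠ ω j ^ 2) :
    LinearIndependent ℝ (oscE N ω) ∧
    Submodule.span ℝ (Set.range (oscE N ω)) = ⊤ :=
  oscE_form_basis_general N ω hdist
end

section
/- Let ω_1, …, ω_N be positive reals with pairwise distinct squares ω_i², let A, B, C, 𝔢_i be as in the canonical-form construction, and let D be the 2N×2N matrix whose i-th column is 𝔢_i (i = 1,…,2N). Then D is invertible and D⁻¹ (A + BC) D = 𝔄 and D⁻¹ B = 𝔅, where 𝔄 is the 2N×2N matrix with entries 𝔄_{i+1,i} = −i for i = 1,…,2N−1 and all other entries zero, and 𝔅 = (1,0,…,0)* ∈ ℝ^{2N}. -/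
open Matrix

/-- The canonical matrix `𝔄` with subdiagonal entries `𝔄_{i+1,i} = -i` (1-based),
i.e. (0-based) entry `-(j+1)` at position `(j+1, j)`, and zeros elsewhere. -/
def frakA (N : ℕ) : Matrix (Fin (2 * N)) (Fin (2 * N)) ℝ :=
  Matrix.of fun i j => if i.val = j.val + 1 then -((j.val : ℝ) + 1) else 0

/-- The canonical vector `𝔅 = (1, 0, …, 0)*`. -/
def frakB (N : ℕ) : Fin (2 * N) → ℝ := fun i => if i.val = 0 then 1 else 0

/-! Put `y_j = -ω_j²`, `P = ∏ (X - y_j)` and `T_m = divX^[N - m] P`, the polynomial formed by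
the top `m + 1` coefficients of `P`; it is monic of degree `m` and `T_{m+1} = X T_m + P_{N-1-m}`.
Splitting `ℝ^{2N}` into the `x`- and `y`-coordinates, `(A + BC)^{2m} B = (0, T_m(y))` and
`(A + BC)^{2m+1} B = (T_m(y), 0)`: the induction step is `∑ c_j T_m(y_j) = P_{N-1-m}`, Lagrange
interpolation of the polynomial `X^m P - X^N T_m` of degree `< N`, since
`c_j = -y_j^N / ∏_{i≠j} (y_j - y_i)`. In particular `(A + BC)^{2N} B = (0, P(y)) = 0`, so
`(A + BC) D = D 𝔄` is just `(A + BC) 𝔢_i = -i 𝔢_{i+1}`. Up to permuting rows and columns and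
scaling columns, `D` is block diagonal with two copies of `(T_q(y_j))_{j,q}`, whose determinant
is the Vandermonde determinant of the distinct nodes `y_j`. -/

open Polynomial Finset Matrix

namespace Polynomial

variable {R : Type*} [Semiring R]

theorem coeff_iterate_divX (p : R[X]) (k n : ℕ) : (divX^[k] p).coeff n = p.coeff (n + k) := by
  induction k generalizing n with
  | zero => rfl
  | succ k ih => rw [Function.iterate_succ_apply', coeff_divX, ih, add_right_comm, add_assoc]

theorem X_mul_iterate_divX_succ_add_C (p : R[X]) (k : ℕ) :
    X * divX^[k + 1] p + C (p.coeff k) = divX^[k] p := by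
  rw [Function.iterate_succ_apply', ← zero_add k, ← coeff_iterate_divX, zero_add]
  exact X_mul_divX_add _

theorem natDegree_iterate_divX (p : R[X]) (k : ℕ) : (divX^[k] p).natDegree = p.natDegree - k := by
  induction k with
  | zero => rfl
  | succ k ih => rw [Function.iterate_succ_apply', natDegree_divX_eq_natDegree_tsub_one, ih]; omega

theorem Monic.iterate_divX {p : R[X]} (hp : p.Monic) {k : ℕ} (hk : k ≤ p.natDegree) :
    (divX^[k] p).Monic := by
  change (divX^[k] p).coeff _ = 1
  rw [natDegree_iterate_divX, coeff_iterate_divX, Nat.sub_add_cancel hk]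
  exact hp

theorem Monic.iterate_divX_natDegree {p : R[X]} (hp : p.Monic) : divX^[p.natDegree] p = 1 := by
  refine eq_one_of_monic_natDegree_zero (hp.iterate_divX le_rfl) ?_
  rw [natDegree_iterate_divX, Nat.sub_self]

end Polynomial

namespace Lagrange

theorem sum_pow_mul_eval_iterate_divX_div {F ι : Type*} [Field F] [DecidableEq ι] {s : Finset ι}
    {v : ι → F} (hvs : Set.InjOn v s) {P : F[X]} (hP : ∀ i ∈ s, P.eval (v i) = 0) {m : ℕ}
    (hm : m < #s) :
    ∑ i ∈ s, v i ^ #s * (divX^[#s - m] P).eval (v i) / ∏ j ∈ s.erase i, (v i - v j) =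
      -P.coeff (#s - 1 - m) := by
  -- `X ^ #s * divX^[#s - m] P` agrees with `X ^ m * P` in all degrees `≥ #s`
  set Q := X ^ m * P - X ^ #s * divX^[#s - m] P
  have hQ_coeff (n : ℕ) : Q.coeff n = (if m ≤ n then P.coeff (n - m) else 0) -
      if #s ≤ n then P.coeff (n - #s + (#s - m)) else 0 := by
    simp only [Q, coeff_sub, coeff_X_pow_mul', coeff_iterate_divX]
  have hQ_degree : Q.degree < #s := by
    refine degree_lt_iff_coeff_zero _ _ |>.mpr fun n hn => ?_
    rw [hQ_coeff, if_pos (by omega), if_pos hn, Nat.sub_add_sub_cancel hn hm.le, sub_self]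
  have hQ_eval : ∀ i ∈ s, Q.eval (v i) = -(v i ^ #s * (divX^[#s - m] P).eval (v i)) := by
    intro i hi
    simp [Q, hP i hi]
  calc ∑ i ∈ s, v i ^ #s * (divX^[#s - m] P).eval (v i) / ∏ j ∈ s.erase i, (v i - v j)
      = -∑ i ∈ s, Q.eval (v i) / ∏ j ∈ s.erase i, (v i - v j) := by
        rw [← sum_neg_distrib]
        exact sum_congr rfl fun i hi => by rw [hQ_eval i hi, neg_div, neg_neg]
    _ = -P.coeff (#s - 1 - m) := by
        rw [← coeff_eq_sum hvs hQ_degree, hQ_coeff, if_pos (by omega), if_neg (by omega), sub_zero]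

end Lagrange

theorem neg_one_pow_div_factorial_eq_neg_succ_mul {K : Type*} [Field K] [CharZero K] (k : ℕ) :
    (-1 : K) ^ k / k.factorial = -((k : K) + 1) * ((-1) ^ (k + 1) / (k + 1).factorial) := by
  rw [Nat.factorial_succ, Nat.cast_mul, pow_succ]
  field_simp
  push_cast
  ring

theorem mul_frakA_apply {N : ℕ} (X : Matrix (Fin (2 * N)) (Fin (2 * N)) ℝ) (r k : Fin (2 * N)) :
    (X * frakA N) r k =
      if h : (k : ℕ) + 1 < 2 * N then -((k : ℝ) + 1) * X r ⟨k + 1, h⟩ else 0 := by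
  simp only [mul_apply, frakA, of_apply, mul_ite, mul_zero]
  split_ifs with h
  · rw [Fintype.sum_eq_single ⟨k + 1, h⟩ fun l hl => if_neg fun h' => hl (Fin.ext h'),
      if_pos rfl, mul_comm]
  · exact sum_eq_zero fun l _ => if_neg (by have := l.isLt; omega)

theorem mulVec_frakB_apply {N : ℕ} (X : Matrix (Fin (2 * N)) (Fin (2 * N)) ℝ) (r : Fin (2 * N)) :
    (X *ᵥ frakB N) r = X r ⟨0, r.pos⟩ := by
  simp only [mulVec, dotProduct, frakB, mul_ite, mul_one, mul_zero]
  exact Fintype.sum_eq_single (⟨0, r.pos⟩ : Fin (2 * N)) fun l hl =>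
    if_neg fun h' => hl (Fin.ext h')

@[simp]
theorem Fin.mk_two_mul_div_two {N : ℕ} (j : Fin N) (h : 2 * j / 2 < N) :
    (⟨2 * j / 2, h⟩ : Fin N) = j := by
  ext; simp only; omega

@[simp]
theorem Fin.mk_two_mul_add_one_div_two {N : ℕ} (j : Fin N) (h : (2 * j + 1) / 2 < N) :
    (⟨(2 * j + 1) / 2, h⟩ : Fin N) = j := by
  ext; simp only; omega

def finEvenOddEquiv (N : ℕ) : Fin N ⊕ Fin N ≃ Fin (2 * N) where
  toFun := Sum.elim (fun j => ⟨2 * j, by omega⟩) (fun j => ⟨2 * j + 1, by omega⟩)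
  invFun i := if i.val % 2 = 0 then .inl ⟨i / 2, by omega⟩ else .inr ⟨i / 2, by omega⟩
  left_inv := by rintro (j | j) <;> simp
  right_inv i := by
    by_cases h : i.val % 2 = 0 <;> simp [h, Fin.ext_iff] <;> omega

@[simp]
theorem val_finEvenOddEquiv_inl {N : ℕ} (j : Fin N) :
    (finEvenOddEquiv N (.inl j) : ℕ) = 2 * j := rfl

@[simp]
theorem val_finEvenOddEquiv_inr {N : ℕ} (j : Fin N) :
    (finEvenOddEquiv N (.inr j) : ℕ) = 2 * j + 1 := rfl

def interleave {α : Type*} {N : ℕ} (x z : Fin N → α) : Fin (2 * N) → α :=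
  Sum.elim x z ∘ (finEvenOddEquiv N).symm

@[simp]
theorem interleave_inl {α : Type*} {N : ℕ} (x z : Fin N → α) (j : Fin N) :
    interleave x z (finEvenOddEquiv N (.inl j)) = x j := by
  simp [interleave]

@[simp]
theorem interleave_inr {α : Type*} {N : ℕ} (x z : Fin N → α) (j : Fin N) :
    interleave x z (finEvenOddEquiv N (.inr j)) = z j := by
  simp [interleave]

theorem interleave_zero {α : Type*} [Zero α] {N : ℕ} : interleave (0 : Fin N → α) 0 = 0 := by
  ext i
  simp [interleave]

section Oscillator

variable {N : ℕ} (ω : Fin N → ℝ)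

def oscNode (j : Fin N) : ℝ := -ω j ^ 2

noncomputable abbrev oscClosedLoop (N : ℕ) (ω : Fin N → ℝ) :
    Matrix (Fin (2 * N)) (Fin (2 * N)) ℝ :=
  oscA N ω + vecMulVec (oscB N) (oscC N ω)

theorem oscClosedLoop_submatrix :
    (oscClosedLoop N ω).submatrix (finEvenOddEquiv N) (finEvenOddEquiv N) =
      fromBlocks 0 1 (diagonal (oscNode ω) + replicateRow (Fin N) (oscc N ω)) 0 := by
  ext (i | i) (j | j) <;>
    simp [oscA, oscB, oscC, oscNode, vecMulVec_apply, diagonal_apply, one_apply, Fin.ext_iff,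
      eq_comm] <;>
    omega

theorem oscClosedLoop_mulVec_interleave (x z : Fin N → ℝ) :
    oscClosedLoop N ω *ᵥ interleave x z =
      interleave z (fun j => oscNode ω j * x j + oscc N ω ⬝ᵥ x) := by
  have h := submatrix_mulVec_equiv (oscClosedLoop N ω) (Sum.elim x z) (finEvenOddEquiv N)
    (finEvenOddEquiv N)
  rw [oscClosedLoop_submatrix, fromBlocks_mulVec] at h
  ext i
  obtain ⟨j | j, rfl⟩ := (finEvenOddEquiv N).surjective i
  · simpa [interleave] using (congrFun h (.inl j)).symm
  · simpa [interleave, add_mulVec, mulVec_diagonal, replicateRow_mulVec_eq_const] using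
      (congrFun h (.inr j)).symm

theorem oscB_eq_interleave : oscB N = interleave 0 1 := by
  ext i
  obtain ⟨j | j, rfl⟩ := (finEvenOddEquiv N).surjective i <;> simp [oscB]

theorem oscNode_injective (hdist : ∀ i j : Fin N, i ≠ j → ω i ^ 2 ≠ ω j ^ 2) :
    Function.Injective (oscNode ω) := fun i j h => by
  by_contra hij
  exact hdist i j hij (neg_injective h)

theorem oscc_eq_div (j : Fin N) :
    oscc N ω j = -oscNode ω j ^ N / ∏ i ∈ univ.erase j, (oscNode ω j - oscNode ω i) := by
  simp only [oscc, oscNode, neg_sub_neg, div_eq_mul_inv, ← prod_inv_distrib]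
  ring

noncomputable def oscPoly (m : ℕ) : ℝ[X] := divX^[N - m] (Lagrange.nodal univ (oscNode ω))

noncomputable def oscPolyAtNodes (m : ℕ) (j : Fin N) : ℝ := (oscPoly ω m).eval (oscNode ω j)

theorem natDegree_nodal_oscNode : (Lagrange.nodal univ (oscNode ω)).natDegree = N := by
  rw [Lagrange.natDegree_nodal, card_univ, Fintype.card_fin]

theorem oscPoly_zero : oscPoly ω 0 = 1 := by
  have h := (Lagrange.nodal_monic (s := univ) (v := oscNode ω)).iterate_divX_natDegree
  rwa [natDegree_nodal_oscNode] at h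

theorem natDegree_oscPoly {m : ℕ} (hm : m ≤ N) : (oscPoly ω m).natDegree = m := by
  rw [oscPoly, natDegree_iterate_divX, natDegree_nodal_oscNode]
  omega

theorem monic_oscPoly {m : ℕ} (hm : m ≤ N) : (oscPoly ω m).Monic :=
  Lagrange.nodal_monic.iterate_divX (by rw [natDegree_nodal_oscNode]; omega)

theorem oscPolyAtNodes_zero : oscPolyAtNodes ω 0 = 1 := by
  ext j
  simp [oscPolyAtNodes, oscPoly_zero]

theorem oscPolyAtNodes_self : oscPolyAtNodes ω N = 0 := by
  ext j
  simp [oscPolyAtNodes, oscPoly, Lagrange.eval_nodal_at_node (mem_univ j)]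

theorem oscc_dotProduct_oscPolyAtNodes (hdist : ∀ i j : Fin N, i ≠ j → ω i ^ 2 ≠ ω j ^ 2)
    {m : ℕ} (hm : m < N) :
    oscc N ω ⬝ᵥ oscPolyAtNodes ω m = (Lagrange.nodal univ (oscNode ω)).coeff (N - 1 - m) := by
  have h := Lagrange.sum_pow_mul_eval_iterate_divX_div (oscNode_injective ω hdist).injOn
    (fun i hi => Lagrange.eval_nodal_at_node hi) (by rwa [card_univ, Fintype.card_fin])
  simp only [card_univ, Fintype.card_fin] at h
  rw [← neg_neg (Polynomial.coeff _ _), ← h, dotProduct, ← sum_neg_distrib]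
  refine sum_congr rfl fun j _ => ?_
  rw [oscc_eq_div, oscPolyAtNodes, oscPoly]
  ring

theorem oscPolyAtNodes_succ (hdist : ∀ i j : Fin N, i ≠ j → ω i ^ 2 ≠ ω j ^ 2)
    {m : ℕ} (hm : m < N) :
    oscPolyAtNodes ω (m + 1) = fun j => oscNode ω j * oscPolyAtNodes ω m j +
      oscc N ω ⬝ᵥ oscPolyAtNodes ω m := by
  ext j
  obtain ⟨k, hk⟩ : ∃ k, N - m = k + 1 := ⟨N - m - 1, by omega⟩
  rw [oscc_dotProduct_oscPolyAtNodes ω hdist hm, oscPolyAtNodes, oscPolyAtNodes, oscPoly, oscPoly,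
    hk, show N - (m + 1) = k by omega, show N - 1 - m = k by omega,
    ← X_mul_iterate_divX_succ_add_C]
  simp

theorem oscClosedLoop_mulVec_interleave_zero_left (x : Fin N → ℝ) :
    oscClosedLoop N ω *ᵥ interleave 0 x = interleave x 0 := by
  rw [oscClosedLoop_mulVec_interleave]
  simp only [Pi.zero_apply, mul_zero, dotProduct_zero, add_zero]
  rfl

theorem pow_two_mul_mulVec_oscB (hdist : ∀ i j : Fin N, i ≠ j → ω i ^ 2 ≠ ω j ^ 2) {m : ℕ}
    (hm : m ≤ N) : oscClosedLoop N ω ^ (2 * m) *ᵥ oscB N = interleave 0 (oscPolyAtNodes ω m) := by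
  induction m with
  | zero => rw [mul_zero, pow_zero, one_mulVec, oscB_eq_interleave, oscPolyAtNodes_zero]
  | succ m ih =>
    rw [mul_add_one, pow_succ', ← mulVec_mulVec, pow_succ', ← mulVec_mulVec, ih (by omega),
      oscClosedLoop_mulVec_interleave_zero_left, oscClosedLoop_mulVec_interleave,
      oscPolyAtNodes_succ ω hdist (by omega)]

theorem pow_two_mul_add_one_mulVec_oscB (hdist : ∀ i j : Fin N, i ≠ j → ω i ^ 2 ≠ ω j ^ 2)
    {m : ℕ} (hm : m ≤ N) :
    oscClosedLoop N ω ^ (2 * m + 1) *ᵥ oscB N = interleave (oscPolyAtNodes ω m) 0 := by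
  rw [pow_succ', ← mulVec_mulVec, pow_two_mul_mulVec_oscB ω hdist hm,
    oscClosedLoop_mulVec_interleave_zero_left]

noncomputable def oscKrylov (N : ℕ) (ω : Fin N → ℝ) : Matrix (Fin (2 * N)) (Fin (2 * N)) ℝ :=
  of fun r k => (oscClosedLoop N ω ^ (k : ℕ) *ᵥ oscB N) r

theorem isUnit_oscKrylov (hdist : ∀ i j : Fin N, i ≠ j → ω i ^ 2 ≠ ω j ^ 2) :
    IsUnit (oscKrylov N ω) := by
  set F : Matrix (Fin N) (Fin N) ℝ := of fun j q => (oscPoly ω q).eval (oscNode ω j)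
  have hF : IsUnit F := by
    rw [isUnit_iff_isUnit_det, isUnit_iff_ne_zero,
      ← det_eval_matrixOfPolynomials_eq_det_vandermonde _ _
        (fun q => natDegree_oscPoly ω q.isLt.le) (fun q => monic_oscPoly ω q.isLt.le)]
    exact det_vandermonde_ne_zero_iff.mpr (oscNode_injective ω hdist)
  -- columns `2q + 1` live on the even rows, columns `2q` on the odd rows
  have hblocks : (oscKrylov N ω).submatrix (finEvenOddEquiv N)
      ((Equiv.sumComm _ _).trans (finEvenOddEquiv N)) = fromBlocks F 0 0 F := by
    ext (j | j) (q | q) <;>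
      simp [oscKrylov, F, oscPolyAtNodes, pow_two_mul_mulVec_oscB ω hdist q.isLt.le,
        pow_two_mul_add_one_mulVec_oscB ω hdist q.isLt.le]
  rw [← isUnit_submatrix_equiv (finEvenOddEquiv N)
    ((Equiv.sumComm _ _).trans (finEvenOddEquiv N)), hblocks]
  simp [hF]

noncomputable def oscD (N : ℕ) (ω : Fin N → ℝ) : Matrix (Fin (2 * N)) (Fin (2 * N)) ℝ :=
  of fun r k => oscE N ω k r

theorem oscD_eq_oscKrylov_mul_diagonal :
    oscD N ω =
      oscKrylov N ω * diagonal fun k : Fin (2 * N) => (-1 : ℝ) ^ (k : ℕ) / (k : ℕ).factorial := by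
  ext r k
  simp [oscD, oscE, oscKrylov, mul_comm]

theorem isUnit_oscD (hdist : ∀ i j : Fin N, i ≠ j → ω i ^ 2 ≠ ω j ^ 2) : IsUnit (oscD N ω) := by
  rw [oscD_eq_oscKrylov_mul_diagonal]
  refine (isUnit_oscKrylov ω hdist).mul (isUnit_diagonal.mpr (Pi.isUnit_iff.mpr fun k => ?_))
  exact isUnit_iff_ne_zero.mpr
    (div_ne_zero (by simp) (Nat.cast_ne_zero.mpr (Nat.factorial_ne_zero _)))

theorem oscClosedLoop_mul_oscD (hdist : ∀ i j : Fin N, i ≠ j → ω i ^ 2 ≠ ω j ^ 2) :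
    oscClosedLoop N ω * oscD N ω = oscD N ω * frakA N := by
  ext r k
  rw [mul_frakA_apply]
  change (oscClosedLoop N ω *ᵥ oscE N ω k) r = _
  rw [oscE, mulVec_smul, mulVec_mulVec, ← pow_succ']
  split_ifs with hk
  · simp only [oscD, of_apply, oscE, Pi.smul_apply, smul_eq_mul,
      neg_one_pow_div_factorial_eq_neg_succ_mul (k : ℕ)]
    ring
  · rw [show (k : ℕ) + 1 = 2 * N by omega, pow_two_mul_mulVec_oscB ω hdist le_rfl,
      oscPolyAtNodes_self, interleave_zero]
    simp

theorem oscD_mulVec_frakB : oscD N ω *ᵥ frakB N = oscB N := by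
  ext r
  simp [mulVec_frakB_apply, oscD, oscE]

end Oscillator

theorem osc_canonical_form_general (N : ℕ) (ω : Fin N → ℝ)
    (hdist : ∀ i j : Fin N, i ≠ j → ω i ^ 2 ≠ ω j ^ 2)
    (D : Matrix (Fin (2 * N)) (Fin (2 * N)) ℝ)
    (hD : D = Matrix.of fun r k => oscE N ω k r) :
    IsUnit D ∧
    D⁻¹ * (oscA N ω + vecMulVec (oscB N) (oscC N ω)) * D = frakA N ∧
    D⁻¹.mulVec (oscB N) = frakB N := by
  obtain rfl : D = oscD N ω := hD
  have hunit := isUnit_oscD ω hdist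
  have hdet := (isUnit_iff_isUnit_det _).mp hunit
  refine ⟨hunit, ?_, ?_⟩
  · rw [mul_assoc, oscClosedLoop_mul_oscD ω hdist, nonsing_inv_mul_cancel_left _ _ hdet]
  · rw [← oscD_mulVec_frakB ω, mulVec_mulVec, nonsing_inv_mul _ hdet, one_mulVec]

/-- The matrix `D` whose `i`-th column is `𝔢_i` is invertible and
conjugates `A + BC` into the canonical form: `D⁻¹ (A + BC) D = 𝔄` and `D⁻¹ B = 𝔅`. -/
theorem osc_canonical_form (N : ℕ) (hN : 0 < N) (ω : Fin N → ℝ)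
    (hpos : ∀ i, 0 < ω i) (hdist : ∀ i j : Fin N, i ≠ j → ω i ^ 2 ≠ ω j ^ 2)
    (D : Matrix (Fin (2 * N)) (Fin (2 * N)) ℝ)
    (hD : D = Matrix.of fun r k => oscE N ω k r) :
    IsUnit D ∧
    D⁻¹ * (oscA N ω + vecMulVec (oscB N) (oscC N ω)) * D = frakA N ∧
    D⁻¹.mulVec (oscB N) = frakB N :=
  osc_canonical_form_general N ω hdist D hD
end

section
/- Let 𝔮 be the 2N×2N matrix with entries 𝔮_{ij} = 1/((i+j)(i+j−1)), 𝔔 = 𝔮⁻¹, 𝔅 = (1,0,…,0)* ∈ ℝ^{2N}, ℭ = −(1/2) 𝔅* 𝔔, 𝔄 the 2N×2N matrix with subdiagonal entries 𝔄_{i+1,i} = −i and all other entries zero, and 𝔐 = diag(1, 2, …, 2N). Then 𝔔 defines a common quadratic Lyapunov function for the matrices −𝔐 and 𝔄 + 𝔅ℭ: both symmetric matrices (−𝔐)*𝔔 + 𝔔(−𝔐) and (𝔄 + 𝔅ℭ)*𝔔 + 𝔔(𝔄 + 𝔅ℭ) are negative definite. -/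
/-!
`qmat n` is the Gram matrix of the monomials `1, t, …, tⁿ⁻¹` on `[0, 1]` for the weight `1 - t`,
and the Hilbert matrix is their Gram matrix for the weight `1`; both are therefore positive
definite. An entrywise computation gives `S 𝔮 + 𝔮 S* = -H` both for `S = -𝔐` and for
`S = 𝔄 + 𝔅ℭ`: for `𝔄` alone the identity fails only at the corner entry, and the feedback term
`𝔅ℭ` contributes exactly `-𝔅𝔅*` there. Conjugating by `𝔔 = 𝔮⁻¹` turns `S 𝔮 + 𝔮 S* = -H` into
`-(S* 𝔔 + 𝔔 S) = 𝔔 H 𝔔`, which is positive definite.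
-/

open Matrix

/-- The matrix `𝔮` with entries `𝔮_{ij} = 1/((i+j)(i+j-1))` (1-based indices). -/
noncomputable def qmat (n : ℕ) : Matrix (Fin n) (Fin n) ℝ :=
  Matrix.of fun i j => ((((i.val + 1) + (j.val + 1)) * (((i.val + 1) + (j.val + 1)) - 1) : ℕ) : ℝ)⁻¹

open Set intervalIntegral
open scoped Polynomial

noncomputable def momentMatrix (w : ℝ → ℝ) (n : ℕ) : Matrix (Fin n) (Fin n) ℝ :=
  of fun i j => ∫ t in (0 : ℝ)..1, w t * t ^ (i + j : ℕ)

noncomputable def hilbertMatrix (n : ℕ) : Matrix (Fin n) (Fin n) ℝ :=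
  of fun i j => ((i : ℝ) + j + 1)⁻¹

lemma eval_ofFn {R : Type*} [Semiring R] [DecidableEq R] (n : ℕ) (x : Fin n → R) (t : R) :
    (Polynomial.ofFn n x).eval t = ∑ i, x i * t ^ (i : ℕ) := by
  simp [Polynomial.ofFn_eq_sum_monomial, Polynomial.eval_finsetSum]

section MomentMatrix

variable {w : ℝ → ℝ}

lemma dotProduct_momentMatrix_mulVec (hw : Continuous w) (n : ℕ) (x : Fin n → ℝ) :
    x ⬝ᵥ (momentMatrix w n *ᵥ x) = ∫ t in (0 : ℝ)..1, w t * (Polynomial.ofFn n x).eval t ^ 2 := by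
  calc x ⬝ᵥ (momentMatrix w n *ᵥ x)
      = ∑ i, ∑ j, ∫ t in (0 : ℝ)..1, x i * x j * (w t * t ^ (i + j : ℕ)) := by
        simp only [dotProduct, mulVec, momentMatrix, of_apply, Finset.mul_sum, integral_const_mul]
        exact Finset.sum_congr rfl fun i _ => Finset.sum_congr rfl fun j _ => by ring
    _ = ∫ t in (0 : ℝ)..1, ∑ i, ∑ j, x i * x j * (w t * t ^ (i + j : ℕ)) := by
        rw [integral_finsetSum fun i _ => (by fun_prop : Continuous _).intervalIntegrable _ _]
        exact Finset.sum_congr rfl fun i _ => (integral_finsetSum fun j _ =>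
          (by fun_prop : Continuous _).intervalIntegrable _ _).symm
    _ = ∫ t in (0 : ℝ)..1, w t * (Polynomial.ofFn n x).eval t ^ 2 := by
        refine integral_congr fun t _ => ?_
        rw [eval_ofFn, sq, Finset.sum_mul_sum, Finset.mul_sum]
        refine Finset.sum_congr rfl fun i _ => ?_
        rw [Finset.mul_sum]
        exact Finset.sum_congr rfl fun j _ => by ring

lemma integral_mul_eval_sq_pos (hw : Continuous w) (hw_nonneg : ∀ t ∈ Ioc (0 : ℝ) 1, 0 ≤ w t)
    (hw_pos : ∀ t ∈ Ioo (0 : ℝ) 1, 0 < w t) {p : ℝ[X]} (hp : p ≠ 0) :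
    0 < ∫ t in (0 : ℝ)..1, w t * p.eval t ^ 2 := by
  obtain ⟨c, hc, hpc⟩ : ∃ c ∈ Ioo (0 : ℝ) 1, ¬ p.IsRoot c :=
    ((Ioo_infinite zero_lt_one).sdiff (Polynomial.finite_setOfPred_isRoot hp)).nonempty
  exact integral_pos zero_lt_one (hw.mul (p.continuous.pow 2)).continuousOn
    (fun t ht => mul_nonneg (hw_nonneg t ht) (sq_nonneg _))
    ⟨c, Ioo_subset_Icc_self hc, mul_pos (hw_pos c hc) (sq_pos_of_ne_zero hpc)⟩

lemma momentMatrix_posDef (hw : Continuous w) (hw_nonneg : ∀ t ∈ Ioc (0 : ℝ) 1, 0 ≤ w t)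
    (hw_pos : ∀ t ∈ Ioo (0 : ℝ) 1, 0 < w t) (n : ℕ) : (momentMatrix w n).PosDef :=
  .of_dotProduct_mulVec_pos (by ext i j; simp [momentMatrix, add_comm]) fun x hx => by
    rw [star_trivial, dotProduct_momentMatrix_mulVec hw]
    exact integral_mul_eval_sq_pos hw hw_nonneg hw_pos
      ((Polynomial.injective_ofFn n).ne_iff' (map_zero _) |>.mpr hx)

end MomentMatrix

lemma hilbertMatrix_eq_momentMatrix (n : ℕ) : hilbertMatrix n = momentMatrix (fun _ => 1) n := by
  ext i j
  simp [hilbertMatrix, momentMatrix, integral_pow]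

lemma qmat_apply (n : ℕ) (i j : Fin n) :
    qmat n i j = (((i : ℝ) + j + 1) * ((i : ℝ) + j + 2))⁻¹ := by
  rw [qmat, of_apply, show (i : ℕ) + 1 + ((j : ℕ) + 1) - 1 = i + j + 1 by omega]
  push_cast
  ring

lemma qmat_eq_momentMatrix (n : ℕ) : qmat n = momentMatrix (fun t => 1 - t) n := by
  ext i j
  have hpow : ∀ k : ℕ, IntervalIntegrable (fun t : ℝ => t ^ k) MeasureTheory.volume 0 1 :=
    fun k => (continuous_pow k).intervalIntegrable _ _
  simp only [momentMatrix, of_apply, qmat_apply, sub_mul, one_mul, ← pow_succ',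
    integral_sub (hpow _) (hpow _), integral_pow]
  field_simp
  push_cast
  ring

lemma hilbertMatrix_posDef (n : ℕ) : (hilbertMatrix n).PosDef :=
  hilbertMatrix_eq_momentMatrix n ▸ momentMatrix_posDef continuous_const (fun _ _ => zero_le_one)
    (fun _ _ => zero_lt_one) n

lemma qmat_posDef (n : ℕ) : (qmat n).PosDef :=
  qmat_eq_momentMatrix n ▸ momentMatrix_posDef (continuous_const.sub continuous_id)
    (fun _ ht => sub_nonneg.mpr ht.2) (fun _ ht => sub_pos.mpr ht.2) n

lemma qmat_transpose (n : ℕ) : (qmat n)ᵀ = qmat n := by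
  ext i j
  simp only [transpose_apply, qmat_apply, add_comm (i : ℝ)]

lemma diagonal_mul_qmat_add_qmat_mul_diagonal (n : ℕ) :
    diagonal (fun i : Fin n => (i : ℝ) + 1) * qmat n
      + qmat n * diagonal (fun i : Fin n => (i : ℝ) + 1) = hilbertMatrix n := by
  ext i j
  simp only [Matrix.add_apply, diagonal_mul, mul_diagonal, qmat_apply, hilbertMatrix, of_apply]
  field_simp
  ring

lemma frakA_mul_qmat_apply (N : ℕ) (i j : Fin (2 * N)) :
    (frakA N * qmat (2 * N)) i j = -(i : ℝ) * (((i : ℝ) + j) * ((i : ℝ) + j + 1))⁻¹ := by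
  rcases Nat.eq_zero_or_eq_succ_pred i.val with hi | hi
  · rw [mul_apply, Finset.sum_eq_zero fun k _ => by simp [frakA, hi]]
    simp [hi]
  · rw [mul_apply, Finset.sum_eq_single ⟨i.val - 1, by omega⟩ fun k _ hk => by
      rw [frakA, of_apply, if_neg fun h => hk (Fin.ext (by simp only; omega)), zero_mul]]
    · simp only [frakA, of_apply, if_pos (by omega : i.val = i.val - 1 + 1), qmat_apply]
      rw [Nat.cast_pred (by omega)]
      ring
    · simp

lemma frakA_mul_qmat_add_qmat_mul_transpose (N : ℕ) :
    frakA N * qmat (2 * N) + qmat (2 * N) * (frakA N)ᵀ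
      = vecMulVec (frakB N) (frakB N) - hilbertMatrix (2 * N) := by
  rw [show qmat (2 * N) * (frakA N)ᵀ = (frakA N * qmat (2 * N))ᵀ by
    rw [transpose_mul, qmat_transpose]]
  ext i j
  simp only [Matrix.add_apply, transpose_apply, frakA_mul_qmat_apply, Matrix.sub_apply,
    vecMulVec_apply, hilbertMatrix, of_apply]
  by_cases hij : i.val + j.val = 0
  · simp [frakB, show i.val = 0 by omega, show j.val = 0 by omega]
  · have hB : frakB N i * frakB N j = 0 := by unfold frakB; split_ifs <;> simp_all
    have h₀ : (i : ℝ) + j ≠ 0 := by exact_mod_cast hij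
    have h₁ : (i : ℝ) + j + 1 ≠ 0 := by positivity
    rw [hB, add_comm (j : ℝ)]
    field_simp
    ring

section Lyapunov

variable {n : Type*} [Fintype n] [DecidableEq n]

lemma neg_transpose_mul_inv_add_inv_mul_posDef {K : Type*} [Field K] [PartialOrder K] [StarRing K]
    [TrivialStar K] {q H S : Matrix n n K} (hq : IsUnit q) (hqT : qᵀ = q) (hH : H.PosDef)
    (hS : S * q + q * Sᵀ = -H) : (-(Sᵀ * q⁻¹ + q⁻¹ * S)).PosDef := by
  have hdet := (isUnit_iff_isUnit_det q).mp hq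
  have hconj : -(Sᵀ * q⁻¹ + q⁻¹ * S) = star q⁻¹ * H * q⁻¹ := by
    rw [star_eq_conjTranspose, conjTranspose_eq_transpose_of_trivial, transpose_nonsing_inv, hqT,
      ← neg_neg H, ← hS, Matrix.mul_neg, Matrix.neg_mul, Matrix.mul_add, Matrix.add_mul,
      Matrix.mul_assoc q⁻¹ (S * q), mul_nonsing_inv_cancel_right q S hdet,
      nonsing_inv_mul_cancel_left q Sᵀ hdet, add_comm]
  rw [hconj]
  exact (IsUnit.posDef_star_left_conjugate_iff (isUnit_nonsing_inv_iff.mpr hq)).mpr hH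

lemma vecMulVec_feedback_mul_add_mul_transpose {q : Matrix n n ℝ} (hq : IsUnit q) (hqT : qᵀ = q)
    (b : n → ℝ) :
    vecMulVec b (-(1 / 2 : ℝ) • b ᵥ* q⁻¹) * q + q * (vecMulVec b (-(1 / 2 : ℝ) • b ᵥ* q⁻¹))ᵀ
      = -vecMulVec b b := by
  have hSq : vecMulVec b (-(1 / 2 : ℝ) • b ᵥ* q⁻¹) * q = -(1 / 2 : ℝ) • vecMulVec b b := by
    rw [vecMulVec_mul, smul_vecMul, vecMul_vecMul,
      nonsing_inv_mul _ ((isUnit_iff_isUnit_det q).mp hq), vecMul_one, vecMulVec_smul]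
  rw [← hqT, ← transpose_mul, hqT, hSq, transpose_smul, transpose_vecMulVec]
  module

end Lyapunov

theorem common_lyapunov_function_general (N : ℕ)
    (Q : Matrix (Fin (2 * N)) (Fin (2 * N)) ℝ) (hQ : Q = (qmat (2 * N))⁻¹)
    (C : Fin (2 * N) → ℝ) (hC : C = -(1 / 2 : ℝ) • Matrix.vecMul (frakB N) Q)
    (M : Matrix (Fin (2 * N)) (Fin (2 * N)) ℝ)
    (hM : M = Matrix.diagonal fun i => ((i.val : ℝ) + 1)) :
    (-((-M)ᵀ * Q + Q * (-M))).PosDef ∧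
    (-((frakA N + vecMulVec (frakB N) C)ᵀ * Q +
        Q * (frakA N + vecMulVec (frakB N) C))).PosDef := by
  subst hQ hC hM
  have hq := (qmat_posDef (2 * N)).isUnit
  have hH := hilbertMatrix_posDef (2 * N)
  constructor
  · refine neg_transpose_mul_inv_add_inv_mul_posDef hq (qmat_transpose _) hH ?_
    rw [transpose_neg, diagonal_transpose, Matrix.neg_mul, Matrix.mul_neg, ← neg_add,
      diagonal_mul_qmat_add_qmat_mul_diagonal]
  · refine neg_transpose_mul_inv_add_inv_mul_posDef hq (qmat_transpose _) hH ?_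
    rw [Matrix.add_mul, transpose_add, Matrix.mul_add, add_add_add_comm,
      frakA_mul_qmat_add_qmat_mul_transpose,
      vecMulVec_feedback_mul_add_mul_transpose hq (qmat_transpose _)]
    abel

/-- With `𝔔 = 𝔮⁻¹`, `ℭ = -(1/2) 𝔅* 𝔔` and `𝔐 = diag(1, …, 2N)`,
`𝔔` is a common quadratic Lyapunov function for `-𝔐` and `𝔄 + 𝔅ℭ`: both symmetric
matrices `(-𝔐)*𝔔 + 𝔔(-𝔐)` and `(𝔄+𝔅ℭ)*𝔔 + 𝔔(𝔄+𝔅ℭ)` are negative definite. -/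
theorem common_lyapunov_function (N : ℕ) (hN : 0 < N)
    (Q : Matrix (Fin (2 * N)) (Fin (2 * N)) ℝ) (hQ : Q = (qmat (2 * N))⁻¹)
    (C : Fin (2 * N) → ℝ) (hC : C = -(1 / 2 : ℝ) • Matrix.vecMul (frakB N) Q)
    (M : Matrix (Fin (2 * N)) (Fin (2 * N)) ℝ)
    (hM : M = Matrix.diagonal fun i => ((i.val : ℝ) + 1)) :
    (-((-M)ᵀ * Q + Q * (-M))).PosDef ∧
    (-((frakA N + vecMulVec (frakB N) C)ᵀ * Q +
        Q * (frakA N + vecMulVec (frakB N) C))).PosDef :=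
  common_lyapunov_function_general N Q hQ C hC M hM
end

section
/- Let 𝔔 be a symmetric positive definite 2N×2N real matrix, 𝔅 = (1,0,…,0)* ∈ ℝ^{2N}, ℭ = −(1/2)𝔅*𝔔, and κ > 0. Then for every y ∈ ℝ^{2N} with ⟨𝔔 y, y⟩ = κ², one has |ℭ y| ≤ (κ/2) √(𝔔_{11}). Consequently, with δ(T) = diag(T^{−1},…,T^{−2N}) and T(x) the unique positive solution of ⟨𝔔δ(T)x, δ(T)x⟩ = κ² for x ≠ 0, the feedback control 𝔲(x) = ℭ δ(T(x)) x satisfies |𝔲(x)| ≤ (κ/2)√(𝔔_{11}) for all x ≠ 0. -/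
open Matrix

/-- The diagonal scaling matrix `δ(T) = diag(T⁻¹, T⁻², …, T^{-2N})`. -/
noncomputable def deltaT (N : ℕ) (T : ℝ) : Matrix (Fin (2 * N)) (Fin (2 * N)) ℝ :=
  Matrix.diagonal fun i => (T ^ (i.val + 1))⁻¹

/-!
Write `⟪u, v⟫ = uᵀ𝔔v` for the semi-inner product defined by `𝔔`. Then `ℭ y = -½ ⟪𝔅, y⟫`, and
Cauchy–Schwarz gives `|ℭ y| ≤ ½ √⟪𝔅, 𝔅⟫ √⟪y, y⟫ = ½ √𝔔₁₁ · κ` on the ellipsoid `⟪y, y⟫ = κ²`.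
The feedback control evaluates `ℭ` at `y = δ(T(x)) x`, which lies on that ellipsoid by the choice
of `T(x)`.
-/

namespace Matrix.PosSemidef

variable {n : Type*} [Fintype n] {Q : Matrix n n ℝ}

theorem dotProduct_mulVec_sq_le (hQ : Q.PosSemidef) (u v : n → ℝ) :
    (u ⬝ᵥ Q *ᵥ v) ^ 2 ≤ (u ⬝ᵥ Q *ᵥ u) * (v ⬝ᵥ Q *ᵥ v) := by
  classical
  have hsymm : v ⬝ᵥ Q *ᵥ u = u ⬝ᵥ Q *ᵥ v := by
    rw [dotProduct_mulVec, ← mulVec_transpose, dotProduct_comm,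
      show Qᵀ = Q from hQ.isHermitian.eq]
  have := LinearMap.BilinForm.apply_mul_apply_le_of_forall_zero_le (toLinearMap₂' ℝ Q)
    (fun x ↦ by simpa [toLinearMap₂'_apply'] using hQ.dotProduct_mulVec_nonneg x) u v
  simpa only [toLinearMap₂'_apply', hsymm, ← sq] using this

theorem abs_row_dotProduct_le [DecidableEq n] (hQ : Q.PosSemidef) (i : n) (y : n → ℝ) :
    |Q.row i ⬝ᵥ y| ≤ √(Q i i) * √(y ⬝ᵥ Q *ᵥ y) := by
  have h := hQ.dotProduct_mulVec_sq_le (Pi.single i 1) y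
  rw [single_dotProduct, single_dotProduct, mulVec_single] at h
  simp only [one_mul, MulOpposite.op_one, one_smul, col_apply] at h
  rw [← Real.sqrt_mul hQ.diag_nonneg]
  exact Real.abs_le_sqrt h

end Matrix.PosSemidef

/-- For a symmetric positive definite `𝔔`, `𝔅 = (1,0,…,0)*` and
`ℭ = -(1/2)𝔅*𝔔`: on the ellipsoid `⟨𝔔y, y⟩ = κ²` one has `|ℭ y| ≤ (κ/2)√(𝔔₁₁)`;
consequently the feedback control `𝔲(x) = ℭ δ(T(x)) x`, where `T(x) > 0` solves
`⟨𝔔δ(T)x, δ(T)x⟩ = κ²`, satisfies `|𝔲(x)| ≤ (κ/2)√(𝔔₁₁)` for all `x ≠ 0`. -/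
theorem feedback_control_bounded (N : ℕ) (hN : 0 < N)
    (Q : Matrix (Fin (2 * N)) (Fin (2 * N)) ℝ) (hQ : Q.PosDef)
    (κ : ℝ) (hκ : 0 < κ)
    (B C : Fin (2 * N) → ℝ)
    (hB : B = fun i => if i.val = 0 then 1 else 0)
    (hC : C = -(1 / 2 : ℝ) • Matrix.vecMul B Q) :
    (∀ y : Fin (2 * N) → ℝ, Q.mulVec y ⬝ᵥ y = κ ^ 2 →
      |C ⬝ᵥ y| ≤ κ / 2 * Real.sqrt (Q ⟨0, by omega⟩ ⟨0, by omega⟩)) ∧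
    (∀ x : Fin (2 * N) → ℝ, x ≠ 0 → ∀ T : ℝ, 0 < T →
      Q.mulVec ((deltaT N T).mulVec x) ⬝ᵥ (deltaT N T).mulVec x = κ ^ 2 →
      |C ⬝ᵥ (deltaT N T).mulVec x| ≤ κ / 2 * Real.sqrt (Q ⟨0, by omega⟩ ⟨0, by omega⟩)) := by
  set i₀ : Fin (2 * N) := ⟨0, by omega⟩
  have hB₀ : B = Pi.single i₀ 1 := by
    ext i
    simp [hB, Pi.single_apply, i₀, Fin.ext_iff]
  have ellipsoid_bound : ∀ y : Fin (2 * N) → ℝ, Q *ᵥ y ⬝ᵥ y = κ ^ 2 →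
      |C ⬝ᵥ y| ≤ κ / 2 * √(Q i₀ i₀) := by
    intro y hy
    rw [dotProduct_comm] at hy
    have hCy : C ⬝ᵥ y = -(1 / 2) * (Q.row i₀ ⬝ᵥ y) := by
      rw [hC, hB₀, single_one_vecMul, smul_dotProduct, smul_eq_mul]
    have h := hQ.posSemidef.abs_row_dotProduct_le i₀ y
    rw [hy, Real.sqrt_sq hκ.le] at h
    rw [hCy, abs_mul, abs_neg, abs_of_pos one_half_pos]
    linarith
  exact ⟨ellipsoid_bound, fun x _ T _ ↦ ellipsoid_bound _⟩
end
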